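/- arXiv:2007.07686 — 3 statements merged into one kernel-verified Lean document; each statement's English description precedes it below -/
import Mathlib

section
/- An essential matrix E = [t]ₓ R with R ∈ SO(3), t ∈ ℝ³, satisfies the Demazure identity 2 E Eᵀ E − tr(E Eᵀ) E = 0. -/
open Matrix Real

def skew (v : Fin 3 → ℝ) : Matrix (Fin 3) (Fin 3) ℝ :=
  !![0, -v 2, v 1; v 2, 0, -v 0; -v 1, v 0, 0]

def quatRot (σ : ℝ) (u : Fin 3 → ℝ) : Matrix (Fin 3) (Fin 3) ℝ :=
  (2 : ℝ) • (vecMulVec u u - σ • skew u) + (σ ^ 2 - u ⬝ᵥ u) • (1 : Matrix (Fin 3) (Fin 3) ℝ)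

noncomputable def rodrigues (θ : ℝ) (r : Fin 3 → ℝ) : Matrix (Fin 3) (Fin 3) ℝ :=
  Real.cos θ • (1 : Matrix (Fin 3) (Fin 3) ℝ) + Real.sin θ • skew r
    + (1 - Real.cos θ) • vecMulVec r r

/-! The Demazure cubic `2 E Eᵀ E - tr(E Eᵀ) E` is unchanged, up to right multiplication by `R`,
when `E` is replaced by `E R` with `R` orthogonal, since `(E R)(E R)ᵀ = E Eᵀ`. So it suffices to
treat `E = [t]ₓ`, where `[t]ₓᵀ = -[t]ₓ`, `[t]ₓ² = t tᵀ - |t|² I` and `[t]ₓ t = 0` give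
`[t]ₓ [t]ₓᵀ [t]ₓ = -[t]ₓ³ = |t|² [t]ₓ` and `tr([t]ₓ [t]ₓᵀ) = 2 |t|²`. -/

section Demazure

variable {n α : Type*} [Fintype n] [DecidableEq n] [CommRing α]

def demazureCubic (E : Matrix n n α) : Matrix n n α :=
  (2 : α) • (E * Eᵀ * E) - (E * Eᵀ).trace • E

theorem mul_mul_transpose_of_mul_transpose_eq_one {E R : Matrix n n α} (hR : R * Rᵀ = 1) :
    E * R * (E * R)ᵀ = E * Eᵀ := by
  rw [transpose_mul, Matrix.mul_assoc, ← Matrix.mul_assoc R, hR, Matrix.one_mul]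

theorem demazureCubic_mul_of_mul_transpose_eq_one {E R : Matrix n n α} (hR : R * Rᵀ = 1) :
    demazureCubic (E * R) = demazureCubic E * R := by
  simp only [demazureCubic, mul_mul_transpose_of_mul_transpose_eq_one hR, Matrix.sub_mul,
    Matrix.smul_mul, Matrix.mul_assoc]

end Demazure

theorem skew_transpose (v : Fin 3 → ℝ) : (skew v)ᵀ = -skew v := by
  ext i j
  fin_cases i <;> fin_cases j <;> simp [skew]

theorem skew_mul_skew (v : Fin 3 → ℝ) :
    skew v * skew v = vecMulVec v v - (v ⬝ᵥ v) • (1 : Matrix (Fin 3) (Fin 3) ℝ) := by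
  ext i j
  fin_cases i <;> fin_cases j <;>
    simp [skew, Matrix.mul_apply, Fin.sum_univ_three, vecMulVec_apply, dotProduct] <;> ring

theorem skew_mul_vecMulVec_self (v : Fin 3 → ℝ) : skew v * vecMulVec v v = 0 := by
  ext i j
  fin_cases i <;> fin_cases j <;>
    simp [skew, Matrix.mul_apply, Fin.sum_univ_three, vecMulVec_apply] <;> ring

theorem trace_skew_mul_transpose (v : Fin 3 → ℝ) :
    (skew v * (skew v)ᵀ).trace = 2 * (v ⬝ᵥ v) := by
  rw [skew_transpose, Matrix.mul_neg, skew_mul_skew, trace_neg, trace_sub, trace_smul,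
    trace_one, trace_vecMulVec, Fintype.card_fin]
  ring

theorem demazureCubic_skew (v : Fin 3 → ℝ) : demazureCubic (skew v) = 0 := by
  have hcube : skew v * (skew v)ᵀ * skew v = (v ⬝ᵥ v) • skew v := by
    rw [skew_transpose, Matrix.mul_neg, Matrix.neg_mul, Matrix.mul_assoc, skew_mul_skew,
      Matrix.mul_sub, skew_mul_vecMulVec_self, Matrix.mul_smul, Matrix.mul_one]
    simp
  rw [demazureCubic, hcube, trace_skew_mul_transpose, smul_smul, sub_self]

theorem essential_demazure_general (R : Matrix (Fin 3) (Fin 3) ℝ) (t : Fin 3 → ℝ)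
    (hR : Rᵀ * R = 1) :
    let E := skew t * R
    (2 : ℝ) • (E * Eᵀ * E) - (E * Eᵀ).trace • E = 0 := by
  change demazureCubic (skew t * R) = 0
  rw [demazureCubic_mul_of_mul_transpose_eq_one (mul_eq_one_comm.mp hR), demazureCubic_skew,
    Matrix.zero_mul]

theorem essential_demazure (R : Matrix (Fin 3) (Fin 3) ℝ) (t : Fin 3 → ℝ)
    (hR : Rᵀ * R = 1) (hRdet : R.det = 1) :
    let E := skew t * R
    (2 : ℝ) • (E * Eᵀ * E) - (E * Eᵀ).trace • E = 0 :=
  essential_demazure_general R t hR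
end

section
/- For a planar motion (rotation about axis r with translation t satisfying rᵀ t = 0), the essential matrix E = [t]ₓ R has zero trace. -/
open Matrix Real

/-! Expanding `R = cos θ I + sin θ [r]ₓ + (1 - cos θ) r rᵀ`, the three terms of `tr([t]ₓ R)` are
`tr [t]ₓ = 0`, `tr([t]ₓ [r]ₓ) = -2 t·r` and `tr([t]ₓ r rᵀ) = r·(t × r) = 0`, so
`tr E = -2 sin θ (t·r)`, which vanishes for a planar motion. -/

theorem skew_mulVec (a u : Fin 3 → ℝ) : skew a *ᵥ u = a ⨯₃ u := by
  ext i
  fin_cases i <;> simp [skew, cross_apply, mulVec, dotProduct, Fin.sum_univ_three] <;> ring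

theorem trace_skew (a : Fin 3 → ℝ) : (skew a).trace = 0 := by
  simp [skew, trace_fin_three]

theorem trace_skew_mul_skew (a b : Fin 3 → ℝ) :
    (skew a * skew b).trace = -2 * (a ⬝ᵥ b) := by
  simp [skew, trace_fin_three, vec3_dotProduct]
  ring

theorem trace_skew_mul_vecMulVec_self (a u : Fin 3 → ℝ) :
    (skew a * vecMulVec u u).trace = 0 := by
  rw [mul_vecMulVec, trace_vecMulVec, skew_mulVec, dotProduct_comm, dot_cross_self]

theorem trace_skew_mul_rodrigues (θ : ℝ) (r t : Fin 3 → ℝ) :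
    (skew t * rodrigues θ r).trace = -2 * Real.sin θ * (t ⬝ᵥ r) := by
  simp only [rodrigues, Matrix.mul_add, Matrix.mul_smul, Matrix.mul_one, trace_add, trace_smul,
    trace_skew, trace_skew_mul_skew, trace_skew_mul_vecMulVec_self, smul_eq_mul]
  ring

theorem planar_motion_trace_zero_general (θ : ℝ) (r t : Fin 3 → ℝ)
    (hplanar : r ⬝ᵥ t = 0) :
    (skew t * rodrigues θ r).trace = 0 := by
  rw [trace_skew_mul_rodrigues, dotProduct_comm, hplanar, mul_zero]

theorem planar_motion_trace_zero (θ : ℝ) (r t : Fin 3 → ℝ)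
    (hunit : r ⬝ᵥ r = 1) (hplanar : r ⬝ᵥ t = 0) :
    (skew t * rodrigues θ r).trace = 0 :=
  planar_motion_trace_zero_general θ r t hplanar
end

section
/- For R in Rodrigues form with angle θ and axis r, sin θ ≠ 0 and rᵀ t ≠ 0 imply tr([t]ₓ R) ≠ 0. -/
open Matrix Real

theorem trace_nonzero_of_screw (θ : ℝ) (r t : Fin 3 → ℝ)
    (hunit : r ⬝ᵥ r = 1) (hsin : Real.sin θ ≠ 0) (hscrew : r ⬝ᵥ t ≠ 0) :
    (skew t * rodrigues θ r).trace ≠ 0 := by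
  have key : (skew t * rodrigues θ r).trace = -2 * Real.sin θ * (r ⬝ᵥ t) := by
    simp only [skew, rodrigues, Matrix.trace, Matrix.diag, Matrix.mul_apply,
      Fin.sum_univ_three, Matrix.add_apply, Matrix.smul_apply, Matrix.one_apply,
      Matrix.vecMulVec_apply, dotProduct, Matrix.cons_val', Matrix.cons_val_zero,
      Matrix.cons_val_one, Matrix.head_cons, Matrix.empty_val', Matrix.cons_val_fin_one,
      Matrix.head_fin_const, Matrix.of_apply, Matrix.cons_val_two, Matrix.tail_cons,
      smul_eq_mul, Fin.isValue]
    norm_num [Fin.ext_iff]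
    ring
  rw [key]
  exact mul_ne_zero (mul_ne_zero (by norm_num) hsin) hscrew
end
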